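/- arXiv:2009.13751 — 2 statements merged into one kernel-verified Lean document; each statement's English description precedes it below -/
import Mathlib

section
/- For n ≥ 4, any two distinct vertices of the folded hypercube FQ_n have either exactly two common neighbors or none. -/
/-!
`FQ n` is the Cayley graph of `(ZMod 2)ⁿ` with respect to `S = {e₁, …, eₙ, 1}`, so the common
neighbours of `u` and `v` are the vertices `u + s` with `s ∈ S` and `s + (u - v) ∈ S`; such `s`
come in pairs `{s, s + (u - v)}`. Two different pairs would give four distinct elements of `S`
summing to zero. This is impossible for `n ≥ 4`: in a nonempty set of at most `n` generators
some coordinate is nonzero in exactly one of them.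
-/

def Q (n : ℕ) : SimpleGraph (Fin n → ZMod 2) :=
  SimpleGraph.fromRel (fun u v => hammingDist u v = 1)

def FQ (n : ℕ) : SimpleGraph (Fin n → ZMod 2) :=
  SimpleGraph.fromRel (fun u v => hammingDist u v = 1 ∨ hammingDist u v = n)

open Finset

theorem Pi.single_left_injective {ι β : Type*} [DecidableEq ι] [Zero β] {b : β} (hb : b ≠ 0) :
    Function.Injective fun i : ι => Pi.single i b := fun i j h => by
  by_contra hij
  simpa [hij, hb] using congrFun h i

theorem Finset.sum_ne_zero_of_isolated_coord {ι R : Type*} [AddCommMonoid R]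
    {A : Finset (ι → R)} {x₀ : ι → R} (hx₀ : x₀ ∈ A) {k : ι} (hk : x₀ k ≠ 0)
    (hA : ∀ y ∈ A, y ≠ x₀ → y k = 0) : ∑ x ∈ A, x ≠ 0 := by
  intro h
  apply hk
  rw [← sum_eq_single_of_mem x₀ hx₀ hA, ← sum_apply, h, Pi.zero_apply]

section Hamming

variable {ι : Type*} [Fintype ι] {β : ι → Type*} [∀ i, Zero (β i)] [∀ i, DecidableEq (β i)]

theorem hammingNorm_eq_card_iff {x : ∀ i, β i} :
    hammingNorm x = Fintype.card ι ↔ ∀ i, x i ≠ 0 := by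
  rw [hammingNorm, ← card_univ, card_filter_eq_iff]
  simp

theorem hammingNorm_eq_one_iff {x : ∀ i, β i} :
    hammingNorm x = 1 ↔ ∃ i, x i ≠ 0 ∧ ∀ j ≠ i, x j = 0 := by
  simp only [hammingNorm, card_eq_one, eq_singleton_iff_unique_mem, mem_filter, mem_univ,
    true_and]
  exact exists_congr fun i => and_congr_right fun _ => forall_congr' fun j => not_imp_comm

end Hamming

theorem SimpleGraph.commonNeighbors_eq_image_of_adj_iff {G : Type*} [AddCommGroup G]
    {Γ : SimpleGraph G} {S : Set G} (hΓ : ∀ u w, Γ.Adj u w ↔ w - u ∈ S) (u v : G) :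
    Γ.commonNeighbors u v = (u + ·) '' {s | s ∈ S ∧ s + (u - v) ∈ S} := by
  ext w
  simp only [mem_commonNeighbors, hΓ, Set.mem_image, Set.mem_ofPred_eq]
  constructor
  · rintro ⟨hu, hv⟩
    exact ⟨w - u, ⟨hu, by rwa [sub_add_sub_cancel]⟩, add_sub_cancel u w⟩
  · rintro ⟨s, ⟨hs, hsd⟩, rfl⟩
    exact ⟨by rwa [add_sub_cancel_left], by rwa [add_comm u, add_sub_assoc]⟩

theorem ncard_setOf_mem_and_add_mem_eq_two_or_eq_empty {G : Type*} [AddCommGroup G]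
    [Module (ZMod 2) G] {S : Set G}
    (hS : ∀ A : Finset G, ↑A ⊆ S → A.Nonempty → #A ≤ 4 → ∑ x ∈ A, x ≠ 0)
    {d : G} (hd : d ≠ 0) :
    {s | s ∈ S ∧ s + d ∈ S}.ncard = 2 ∨ {s | s ∈ S ∧ s + d ∈ S} = ∅ := by
  classical
  rcases Set.eq_empty_or_nonempty {s | s ∈ S ∧ s + d ∈ S} with h | ⟨s, hs, hsd⟩
  · exact Or.inr h
  have hd' : ∀ x : G, x ≠ x + d := fun x => by simpa [eq_comm] using hd
  suffices {s | s ∈ S ∧ s + d ∈ S} = {s, s + d} from Or.inl (this ▸ Set.ncard_pair (hd' s))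
  ext t
  simp only [Set.mem_ofPred_eq, Set.mem_insert_iff, Set.mem_singleton_iff]
  constructor
  · rintro ⟨ht, htd⟩
    by_contra! hts
    have hts' : t + d ≠ s ∧ t + d ≠ s + d := by
      refine ⟨fun h => hts.2 ?_, fun h => hts.1 (add_right_cancel h)⟩
      rw [← h, add_assoc, ZModModule.add_self, add_zero]
    apply hS {s, s + d, t, t + d} (by simp [Set.insert_subset_iff, *]) (insert_nonempty _ _)
      card_le_four
    rw [sum_insert (by simp [hd' s, Ne.symm hts.1, Ne.symm hts'.1]),
      sum_insert (by simp [Ne.symm hts.2, hts'.2.symm]), sum_pair (hd' t)]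
    calc s + (s + d + (t + (t + d))) = (s + s) + (t + t) + (d + d) := by abel
      _ = 0 := by simp [ZModModule.add_self]
  · rintro (rfl | rfl)
    · exact ⟨hs, hsd⟩
    · exact ⟨hsd, by rwa [add_assoc, ZModModule.add_self, add_zero]⟩

def foldedGens (n : ℕ) : Set (Fin n → ZMod 2) :=
  insert 1 (Set.range fun i => Pi.single i 1)

theorem mem_foldedGens_iff {n : ℕ} {x : Fin n → ZMod 2} :
    x ∈ foldedGens n ↔ hammingNorm x = 1 ∨ hammingNorm x = n := by
  have hone : ∀ a : ZMod 2, a ≠ 0 ↔ a = 1 := by decide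
  have hcard : hammingNorm x = n ↔ ∀ i, x i ≠ 0 := by simpa using hammingNorm_eq_card_iff (x := x)
  rw [hammingNorm_eq_one_iff, hcard, foldedGens, Set.mem_insert_iff, Set.mem_range, or_comm,
    funext_iff]
  simp only [hone, Pi.one_apply]
  refine or_congr_left ⟨?_, ?_⟩
  · rintro ⟨i, rfl⟩
    exact ⟨i, by simp, fun j hj => Pi.single_eq_of_ne hj 1⟩
  · rintro ⟨i, hi, hj⟩
    refine ⟨i, funext fun j => ?_⟩
    rcases eq_or_ne j i with rfl | hji
    · simp [hi]
    · simp [Pi.single_eq_of_ne hji, hj j hji]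

theorem FQ_adj_iff {n : ℕ} (hn : 0 < n) {u w : Fin n → ZMod 2} :
    (FQ n).Adj u w ↔ w - u ∈ foldedGens n := by
  rw [FQ, SimpleGraph.fromRel_adj, hammingDist_comm w u, or_self, hammingDist_eq_hammingNorm,
    neg_add_eq_sub, ← mem_foldedGens_iff]
  refine and_iff_right_of_imp fun h huw => ?_
  rw [huw, sub_self, mem_foldedGens_iff, hammingNorm_zero] at h
  omega

theorem sum_ne_zero_of_subset_foldedGens {n : ℕ} {A : Finset (Fin n → ZMod 2)}
    (hA : ↑A ⊆ foldedGens n) (hne : A.Nonempty) (hcard : #A ≤ n) : ∑ x ∈ A, x ≠ 0 := by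
  have hsingle : ∀ y ∈ A, ∀ k, y ≠ 1 → y ≠ Pi.single k 1 → y k = 0 := by
    intro y hy k h1 hk
    obtain h | ⟨j, rfl⟩ := hA hy
    · exact absurd h h1
    · exact Pi.single_eq_of_ne (fun hkj => hk (by rw [hkj])) 1
  by_cases h1 : (1 : Fin n → ZMod 2) ∈ A
  · obtain ⟨k, hk⟩ : ∃ k, Pi.single k (1 : ZMod 2) ∉ A.erase 1 := by
      by_contra! h
      have := card_le_card_of_injOn (s := univ) (fun k => Pi.single k (1 : ZMod 2))
        (fun k _ => h k) (Pi.single_left_injective one_ne_zero).injOn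
      rw [card_univ, Fintype.card_fin, card_erase_of_mem h1] at this
      have := card_pos.mpr ⟨_, h1⟩
      omega
    refine sum_ne_zero_of_isolated_coord h1 (k := k) one_ne_zero fun y hy hy1 => ?_
    exact hsingle y hy k hy1 fun h => hk (h ▸ mem_erase.mpr ⟨hy1, hy⟩)
  · obtain ⟨x₀, hx₀⟩ := hne
    obtain h | ⟨k, rfl⟩ := hA hx₀
    · exact absurd (h ▸ hx₀) h1
    refine sum_ne_zero_of_isolated_coord hx₀ (k := k) (by simp) fun y hy hyk => ?_
    exact hsingle y hy k (fun h => h1 (h ▸ hy)) hyk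

/-- For n ≥ 4, any two distinct vertices of FQ_n have exactly two common
neighbors or none. -/
theorem folded_hypercube_common_neighbors (n : ℕ) (hn : 4 ≤ n)
    (u v : Fin n → ZMod 2) (huv : u ≠ v) :
    {w | (FQ n).Adj u w ∧ (FQ n).Adj v w}.ncard = 2 ∨
    {w | (FQ n).Adj u w ∧ (FQ n).Adj v w} = ∅ := by
  have hcommon : {w | (FQ n).Adj u w ∧ (FQ n).Adj v w} =
      (u + ·) '' {s | s ∈ foldedGens n ∧ s + (u - v) ∈ foldedGens n} :=
    SimpleGraph.commonNeighbors_eq_image_of_adj_iff (fun _ _ => FQ_adj_iff (by omega)) u v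
  rw [hcommon, Set.ncard_image_of_injective _ (add_right_injective u), Set.image_eq_empty]
  exact ncard_setOf_mem_and_add_mem_eq_two_or_eq_empty
    (fun A hA hne h4 => sum_ne_zero_of_subset_foldedGens hA hne (h4.trans hn))
    (sub_ne_zero.mpr huv)
end

section
/- For n ≥ 5, FQ_n contains no cycle of length 3 and no cycle of length 5. -/
/-!
A closed walk at `u` in `FQ n` consists of `a` antipodal steps `x ↦ x + 1` and `b` cube steps,
so `u` lies within Hamming distance `b` of `u + a`, at a distance of the same parity as `b`.
If `a` is even that distance is `0`, so `b` and the length `a + b` are even; if `a` is odd it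
is `n`, so the length is at least `n + 1`. Hence odd closed walks have length at least `n + 1`.
-/

section ZModTwo

variable {ι : Type*} [Fintype ι]

theorem ZMod.two_ne_iff_eq_add_one {a b : ZMod 2} : a ≠ b ↔ b = a + 1 := by
  revert a b; decide

theorem cast_hammingNorm_zmod_two (x : ι → ZMod 2) : (hammingNorm x : ZMod 2) = ∑ i, x i := by
  rw [hammingNorm, Finset.card_filter, Nat.cast_sum]
  refine Finset.sum_congr rfl fun i _ => ?_
  generalize x i = a
  revert a; decide

theorem cast_hammingDist_zmod_two_add (x y z : ι → ZMod 2) :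
    (hammingDist x z : ZMod 2) = hammingDist x y + hammingDist y z := by
  simp only [hammingDist_eq_hammingNorm, cast_hammingNorm_zmod_two, ← Finset.sum_add_distrib]
  exact Finset.sum_congr rfl fun i _ => by simp only [Pi.add_apply, Pi.neg_apply]; ring

theorem hammingDist_add_right {G : Type*} [DecidableEq G] [Add G] [IsRightCancelAdd G]
    (x y c : ι → G) :
    hammingDist (x + c) (y + c) = hammingDist x y :=
  hammingDist_comp (fun i => (· + c i)) fun i => add_left_injective (c i)

theorem hammingDist_eq_card_iff_zmod_two {x y : ι → ZMod 2} :
    hammingDist x y = Fintype.card ι ↔ y = x + 1 := by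
  rw [hammingDist, ← Finset.card_univ, Finset.card_filter_eq_iff, funext_iff]
  simp [ZMod.two_ne_iff_eq_add_one]

end ZModTwo

namespace FQ

variable {n : ℕ}

theorem hammingDist_eq_dim_iff {u v : Fin n → ZMod 2} : hammingDist u v = n ↔ v = u + 1 := by
  simpa using hammingDist_eq_card_iff_zmod_two (x := u) (y := v)

theorem adj_iff {u v : Fin n → ZMod 2} :
    (FQ n).Adj u v ↔ u ≠ v ∧ (hammingDist u v = 1 ∨ v = u + 1) := by
  rw [FQ, SimpleGraph.fromRel_adj, hammingDist_comm v u, or_self, hammingDist_eq_dim_iff]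

/-- `a` counts the antipodal steps of `w` and `b` its cube steps. -/
theorem exists_hammingDist_le_of_walk {u v : Fin n → ZMod 2} (w : (FQ n).Walk u v) :
    ∃ a b : ℕ, a + b = w.length ∧ hammingDist (u + (a : Fin n → ZMod 2)) v ≤ b ∧
      (hammingDist (u + (a : Fin n → ZMod 2)) v : ZMod 2) = b := by
  induction w with
  | nil => exact ⟨0, 0, by simp⟩
  | @cons u x v hux w ih =>
    obtain ⟨a, b, hlen, hle, hpar⟩ := ih
    rcases (adj_iff.mp hux).2 with hcube | rfl
    · set A : Fin n → ZMod 2 := (a : Fin n → ZMod 2)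
      have hstep : hammingDist (u + A) (x + A) = 1 := by rw [hammingDist_add_right, hcube]
      refine ⟨a, b + 1, by simp [← hlen, add_assoc], ?_, ?_⟩
      · calc hammingDist (u + A) v
            ≤ hammingDist (u + A) (x + A) + hammingDist (x + A) v := hammingDist_triangle _ _ _
          _ ≤ b + 1 := by omega
      · rw [cast_hammingDist_zmod_two_add _ (x + A), hstep, hpar]
        push_cast; ring
    · refine ⟨a + 1, b, by simp [← hlen]; ring, ?_, ?_⟩ <;>
        rwa [Nat.cast_succ, add_comm (a : Fin n → ZMod 2), ← add_assoc]

theorem le_length_of_odd {u : Fin n → ZMod 2} (w : (FQ n).Walk u u) (hw : Odd w.length) :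
    n + 1 ≤ w.length := by
  obtain ⟨a, b, hlen, hle, hpar⟩ := exists_hammingDist_le_of_walk w
  rcases Nat.even_or_odd a with ha | ha
  · have hzero : (a : Fin n → ZMod 2) = 0 :=
      funext fun _ => (ZMod.natCast_eq_zero_iff_even).mpr ha
    rw [hzero, add_zero, hammingDist_self, Nat.cast_zero, eq_comm,
      ZMod.natCast_eq_zero_iff_even] at hpar
    exact absurd (hlen ▸ ha.add hpar) (Nat.not_even_iff_odd.mpr hw)
  · have hone : (a : Fin n → ZMod 2) = 1 := funext fun _ => (ZMod.natCast_eq_one_iff_odd).mpr ha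
    have hdist : hammingDist (u + 1) u = n := by
      rw [hammingDist_comm, hammingDist_eq_dim_iff]
    rw [hone, hdist] at hle
    have := ha.pos
    omega

end FQ

/-- For n ≥ 5, FQ_n contains no cycle of length 3 and no cycle of length 5. -/
theorem folded_hypercube_no_C3_C5 (n : ℕ) (hn : 5 ≤ n) :
    ∀ (u : Fin n → ZMod 2) (w : (FQ n).Walk u u),
      w.IsCycle → w.length ≠ 3 ∧ w.length ≠ 5 := by
  intro u w _
  constructor <;> intro h <;> have := FQ.le_length_of_odd w (by rw [h]; decide) <;> omega
end
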